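/- Let I be a monomial ideal of S of Borel type and let k ≥ 1 be an integer. Then the k-th symbolic power I^(k) is a monomial ideal of Borel type. -/

import Mathlib

open MvPolynomial

/-- An ideal of `K[x_1, …, x_n]` is a monomial ideal if it is generated by monomials. -/
def IsMonomialIdeal {K : Type*} [Field K] {n : ℕ} (I : Ideal (MvPolynomial (Fin n) K)) : Prop :=
  ∃ G : Set (Fin n →₀ ℕ),
    I = Ideal.span ((fun a => (monomial a (1 : K) : MvPolynomial (Fin n) K)) '' G)

/-- A monomial ideal `I` is of Borel type if for every monomial `u ∈ I` and all
`i < j`, `s ≥ 1` with `x_j ^ s ∣ u`, there is `t ≥ 0` with `x_i ^ t * (u / x_j ^ s) ∈ I`. -/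
def IsBorelType {K : Type*} [Field K] {n : ℕ} (I : Ideal (MvPolynomial (Fin n) K)) : Prop :=
  ∀ a : Fin n →₀ ℕ, (monomial a (1 : K) : MvPolynomial (Fin n) K) ∈ I →
    ∀ i j : Fin n, i < j → ∀ s : ℕ, 1 ≤ s → s ≤ a j →
      ∃ t : ℕ,
        (monomial (a - Finsupp.single j s + Finsupp.single i t) (1 : K) :
          MvPolynomial (Fin n) K) ∈ I

/-- The kernel of `R → (R/I)_P`: the ideal `{r : r * s ∈ I for some s ∉ P}`. -/
def kerLoc {R : Type*} [CommRing R] (I P : Ideal R) (hP : P.IsPrime) : Ideal R where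
  carrier := {r : R | ∃ s, s ∉ P ∧ r * s ∈ I}
  add_mem' := by
    rintro a b ⟨s, hs, has⟩ ⟨t, ht, hbt⟩
    refine ⟨s * t, fun h => (hP.mem_or_mem h).elim hs ht, ?_⟩
    have h : (a + b) * (s * t) = (a * s) * t + (b * t) * s := by ring
    rw [h]
    exact Ideal.add_mem _ (Ideal.mul_mem_right _ _ has) (Ideal.mul_mem_right _ _ hbt)
  zero_mem' := ⟨1, fun h => hP.ne_top ((Ideal.eq_top_iff_one P).mpr h), by simp⟩
  smul_mem' := by
    rintro c a ⟨s, hs, has⟩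
    exact ⟨s, hs, by rw [smul_eq_mul, mul_assoc]; exact Ideal.mul_mem_left _ _ has⟩

/-- The `k`-th symbolic power of an ideal `I`:
`I^(k) = ⋂_{P ∈ Min(I)} ker (R → (R/I^k)_P)`. -/
def symbolicPower {R : Type*} [CommRing R] (I : Ideal R) (k : ℕ) : Ideal R :=
  ⨅ P : I.minimalPrimes, kerLoc (I ^ k) P.1 P.2.1.1

/-!
Let `m` be least with `I ⊆ P = (x_1, …, x_m)`. Borel moves push a monomial of `I` that avoids
`x_1, …, x_{i-1}` onto a pure power of `x_i`, so every `x_i` with `i ≤ m` has a power in `I` and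
`P` is the only minimal prime of `I`. Hence `I^(k)` is the saturation of `I^k` by the elements
outside `P`. Comparing lex-smallest terms shows that such elements are nonzerodivisors modulo any
monomial ideal generated in `x_1, …, x_m`; so `I^(k)` is generated by the generators of the
monomial Borel ideal `I^k` with `x_{m+1}, …, x_n` set to `1`, and this substitution commutes with
Borel moves.
-/

open scoped Pointwise

section MonomialSpan

variable {σ R : Type*}

variable (R) in
noncomputable def monomialSpan [CommSemiring R] (G : Set (σ →₀ ℕ)) :
    Ideal (MvPolynomial σ R) :=
  Ideal.span ((fun a => monomial a (1 : R)) '' G)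

theorem mem_monomialSpan [CommSemiring R] {G : Set (σ →₀ ℕ)} {p : MvPolynomial σ R} :
    p ∈ monomialSpan R G ↔ ∀ a ∈ p.support, ∃ g ∈ G, g ≤ a :=
  mem_ideal_span_monomial_image

theorem monomial_mem_monomialSpan [CommSemiring R] [Nontrivial R] {G : Set (σ →₀ ℕ)}
    {a : σ →₀ ℕ} : monomial a (1 : R) ∈ monomialSpan R G ↔ ∃ g ∈ G, g ≤ a := by
  classical
  simp [mem_monomialSpan, support_monomial]

theorem monomialSpan_zero [CommSemiring R] : monomialSpan R ({0} : Set (σ →₀ ℕ)) = ⊤ := by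
  simp [monomialSpan]

theorem monomialSpan_mul [CommSemiring R] (A B : Set (σ →₀ ℕ)) :
    monomialSpan R A * monomialSpan R B = monomialSpan R (A + B) := by
  rw [monomialSpan, monomialSpan, monomialSpan, Ideal.span_mul_span', ← Set.image2_mul,
    ← Set.image2_add, Set.image2_image_left, Set.image2_image_right, Set.image_image2]
  simp only [monomial_mul, one_mul]

theorem exists_sub_mem_monomialSpan [CommRing R] {G : Set (σ →₀ ℕ)} (r : MvPolynomial σ R) :
    ∃ r', r - r' ∈ monomialSpan R G ∧ ∀ a ∈ r'.support, ∀ g ∈ G, ¬ g ≤ a := by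
  classical
  refine ⟨∑ a ∈ r.support with ∀ g ∈ G, ¬ g ≤ a, monomial a (r.coeff a), ?_, fun a ha => ?_⟩
  · nth_rewrite 1 [as_sum r]
    rw [← Finset.sum_filter_not_add_sum_filter r.support (fun a => ∀ g ∈ G, ¬ g ≤ a),
      add_sub_cancel_right]
    refine Ideal.sum_mem _ fun a ha => mem_monomialSpan.2 fun b hb => ?_
    obtain ⟨g, hg, hga⟩ := by simpa using (Finset.mem_filter.1 ha).2
    exact ⟨g, hg, Finset.mem_singleton.1 (support_monomial_subset hb) ▸ hga⟩
  · obtain ⟨b, hb, hab⟩ := Finset.mem_biUnion.1 (support_sum ha)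
    obtain rfl := Finset.mem_singleton.1 (support_monomial_subset hab)
    exact (Finset.mem_filter.1 hb).2

end MonomialSpan

section MonomialIdeal

variable {K : Type*} [Field K] {n : ℕ} {I J : Ideal (MvPolynomial (Fin n) K)}

theorem isMonomialIdeal_top : IsMonomialIdeal (⊤ : Ideal (MvPolynomial (Fin n) K)) :=
  ⟨{0}, monomialSpan_zero.symm⟩

theorem IsMonomialIdeal.mul (hI : IsMonomialIdeal I) (hJ : IsMonomialIdeal J) :
    IsMonomialIdeal (I * J) := by
  obtain ⟨A, rfl⟩ := hI
  obtain ⟨B, rfl⟩ := hJ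
  exact ⟨A + B, monomialSpan_mul A B⟩

theorem IsMonomialIdeal.pow (hI : IsMonomialIdeal I) (k : ℕ) : IsMonomialIdeal (I ^ k) := by
  induction k with
  | zero => simpa using isMonomialIdeal_top
  | succ k ih => simpa [pow_succ] using ih.mul hI

theorem IsMonomialIdeal.monomial_mem {p : MvPolynomial (Fin n) K} {a : Fin n →₀ ℕ}
    (hI : IsMonomialIdeal I) (hp : p ∈ I) (ha : a ∈ p.support) : monomial a 1 ∈ I := by
  obtain ⟨G, rfl⟩ := hI
  exact monomial_mem_monomialSpan.2 (mem_monomialSpan.1 hp a ha)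

end MonomialIdeal

section BorelType

variable {K : Type*} [Field K] {n : ℕ} {I J : Ideal (MvPolynomial (Fin n) K)}

theorem isBorelType_top : IsBorelType (⊤ : Ideal (MvPolynomial (Fin n) K)) :=
  fun _ _ _ _ _ _ _ _ => ⟨0, Submodule.mem_top⟩

theorem IsBorelType.exists_monomial_mem (hI : IsBorelType I) {a : Fin n →₀ ℕ}
    (ha : monomial a 1 ∈ I) {i j : Fin n} (hij : i < j) {s : ℕ} (hs : s ≤ a j) :
    ∃ t, monomial (a - Finsupp.single j s + Finsupp.single i t) (1 : K) ∈ I := by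
  rcases Nat.eq_zero_or_pos s with rfl | hs0
  · exact ⟨0, by simpa using ha⟩
  · exact hI a ha i j hij s hs0 hs

theorem IsBorelType.monomialSpan_add {A B : Set (Fin n →₀ ℕ)}
    (hA : IsBorelType (monomialSpan K A)) (hB : IsBorelType (monomialSpan K B)) :
    IsBorelType (monomialSpan K (A + B)) := by
  intro c hc i j hij s _ hs
  obtain ⟨_, ⟨a, ha, b, hb, rfl⟩, habc⟩ := monomial_mem_monomialSpan.1 hc
  -- take as much of `x_j ^ s` as possible from `a`, then from `b`, the rest from the cofactor
  obtain ⟨t₁, ht₁⟩ := hA.exists_monomial_mem (monomial_mem_monomialSpan.2 ⟨a, ha, le_rfl⟩) hij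
    (min_le_right s (a j))
  obtain ⟨t₂, ht₂⟩ := hB.exists_monomial_mem (monomial_mem_monomialSpan.2 ⟨b, hb, le_rfl⟩) hij
    (min_le_right (s - min s (a j)) (b j))
  obtain ⟨a', ha', ha'le⟩ := monomial_mem_monomialSpan.1 ht₁
  obtain ⟨b', hb', hb'le⟩ := monomial_mem_monomialSpan.1 ht₂
  refine ⟨t₁ + t₂, monomial_mem_monomialSpan.2 ⟨a' + b', Set.add_mem_add ha' hb', fun l => ?_⟩⟩
  have h₁ := ha'le l
  have h₂ := hb'le l
  have h₃ := habc l
  have h₄ := habc j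
  simp only [Finsupp.coe_add, Finsupp.coe_tsub, Pi.add_apply, Pi.sub_apply,
    Finsupp.single_apply] at h₁ h₂ h₃ h₄ ⊢
  split_ifs at h₁ h₂ ⊢ <;> subst_vars <;> omega

theorem IsBorelType.mul (hI : IsBorelType I) (hJ : IsBorelType J) (hIm : IsMonomialIdeal I)
    (hJm : IsMonomialIdeal J) : IsBorelType (I * J) := by
  obtain ⟨A, rfl⟩ := hIm
  obtain ⟨B, rfl⟩ := hJm
  have h := hI.monomialSpan_add hJ
  rwa [← monomialSpan_mul] at h

theorem IsBorelType.pow (hI : IsBorelType I) (hIm : IsMonomialIdeal I) (k : ℕ) :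
    IsBorelType (I ^ k) := by
  induction k with
  | zero => simpa using isBorelType_top
  | succ k ih => simpa [pow_succ] using ih.mul hI (hIm.pow k) hIm

theorem IsBorelType.exists_X_pow_mem (hI : IsBorelType I) {i : Fin n} {a : Fin n →₀ ℕ}
    (ha : monomial a 1 ∈ I) (hai : ∀ l < i, a l = 0) : ∃ t, X i ^ t ∈ I := by
  classical
  by_cases h : ∃ l, i < l ∧ a l ≠ 0
  · obtain ⟨l, hil, -⟩ := h
    obtain ⟨t, ht⟩ := hI.exists_monomial_mem ha hil le_rfl
    refine hI.exists_X_pow_mem ht fun k hk => ?_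
    simp [hai k hk, hk.ne, (hk.trans hil).ne]
  · push Not at h
    refine ⟨a i, ?_⟩
    convert ha
    rw [X_pow_eq_monomial]
    congr
    ext l
    rcases lt_trichotomy l i with hl | rfl | hl
    · simp [hai l hl, hl.ne]
    · simp
    · simp [h l hl, hl.ne']
termination_by (a.support.filter (i < ·)).card
decreasing_by
  refine Finset.card_lt_card ⟨fun k hk => ?_, fun hsub => ?_⟩
  · simp only [Finset.mem_filter, Finsupp.mem_support_iff] at hk ⊢
    simp only [Finsupp.coe_add, Finsupp.coe_tsub, Pi.add_apply, Pi.sub_apply,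
      Finsupp.single_apply, if_neg hk.2.ne, add_zero] at hk
    exact ⟨fun h0 => hk.1 (by simp [h0]), hk.2⟩
  · have := hsub (Finset.mem_filter.2 ⟨Finsupp.mem_support_iff.2 ‹_›, hil⟩)
    simp [hil.ne'] at this

end BorelType

theorem MvPolynomial.coeff_mul_add_of_forall_toLex_le {σ R : Type*} [LinearOrder σ]
    [CommSemiring R] {p q : MvPolynomial σ R} {a b : σ →₀ ℕ}
    (ha : ∀ x ∈ p.support, toLex a ≤ toLex x) (hb : ∀ y ∈ q.support, toLex b ≤ toLex y) :
    (p * q).coeff (a + b) = p.coeff a * q.coeff b := by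
  refine AddMonoidAlgebra.coeff_mul_add_of_uniqueAdd fun x y hx hy hxy => ?_
  have hxy' : toLex x + toLex y = toLex a + toLex b := congrArg toLex hxy
  obtain rfl : x = a := by
    by_contra hne
    exact (add_lt_add_of_lt_of_le ((ha x hx).lt_of_ne (Ne.symm hne)) (hb y hy)).ne' hxy'
  exact ⟨rfl, add_left_cancel hxy⟩

theorem Finsupp.forall_lt_eq_zero_of_toLex_le {n m : ℕ} {b c : Fin n →₀ ℕ}
    (hbc : toLex b ≤ toLex c) (hc : ∀ i : Fin n, (i : ℕ) < m → c i = 0) :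
    ∀ i : Fin n, (i : ℕ) < m → b i = 0 := by
  rcases hbc.eq_or_lt with h | h
  · exact toLex_inj.1 h ▸ hc
  · obtain ⟨j, hj, hbj⟩ := Finsupp.Lex.lt_iff.1 h
    intro i hi
    rcases lt_or_ge i j with hij | hji
    · exact (hj i hij).trans (hc i hi)
    · have := hc j (lt_of_le_of_lt hji hi)
      simp only [ofLex_toLex] at hbj
      omega

section InitialVars

variable {R : Type*} {n m : ℕ}

variable (R n m) in
noncomputable def initialVarsIdeal [CommSemiring R] :
    Ideal (MvPolynomial (Fin n) R) :=
  Ideal.span (X '' {i | (i : ℕ) < m})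

theorem notMem_initialVarsIdeal [CommSemiring R] {p : MvPolynomial (Fin n) R} :
    p ∉ initialVarsIdeal R n m ↔ ∃ a ∈ p.support, ∀ i : Fin n, (i : ℕ) < m → a i = 0 := by
  simp [initialVarsIdeal, mem_ideal_span_X_image]

theorem initialVarsIdeal_eq_monomialSpan [CommSemiring R] :
    initialVarsIdeal R n m =
      monomialSpan R ((Finsupp.single · 1) '' {i : Fin n | (i : ℕ) < m}) := by
  rw [initialVarsIdeal, monomialSpan, Set.image_image]
  rfl

theorem mem_monomialSpan_of_mul_mem [CommRing R] [NoZeroDivisors R] {G : Set (Fin n →₀ ℕ)}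
    (hG : ∀ g ∈ G, ∀ i : Fin n, m ≤ (i : ℕ) → g i = 0) {r s : MvPolynomial (Fin n) R}
    (hs : s ∉ initialVarsIdeal R n m) (hrs : r * s ∈ monomialSpan R G) :
    r ∈ monomialSpan R G := by
  obtain ⟨r', hrr', hr'⟩ := exists_sub_mem_monomialSpan (G := G) r
  by_contra hr
  have hr'0 : r' ≠ 0 := by
    rintro rfl
    exact hr (by simpa using hrr')
  have hr's : r' * s ∈ monomialSpan R G := by
    simpa [sub_mul] using sub_mem hrs (Ideal.mul_mem_right s _ hrr')
  obtain ⟨a, ha, hamin⟩ := r'.support.exists_min_image toLex (support_nonempty.2 hr'0)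
  obtain ⟨b₀, hb₀, hb₀m⟩ := notMem_initialVarsIdeal.1 hs
  obtain ⟨b, hb, hbmin⟩ := s.support.exists_min_image toLex ⟨b₀, hb₀⟩
  have hbm := Finsupp.forall_lt_eq_zero_of_toLex_le (hbmin b₀ hb₀) hb₀m
  have hab : a + b ∈ (r' * s).support := by
    rw [mem_support_iff, coeff_mul_add_of_forall_toLex_le hamin hbmin]
    exact mul_ne_zero (mem_support_iff.1 ha) (mem_support_iff.1 hb)
  obtain ⟨g, hg, hgab⟩ := mem_monomialSpan.1 hr's _ hab
  refine hr' a ha g hg fun i => ?_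
  by_cases hi : (i : ℕ) < m
  · simpa [hbm i hi] using hgab i
  · simp [hG g hg i (by omega)]

theorem initialVarsIdeal_isPrime [CommRing R] [IsDomain R] :
    (initialVarsIdeal R n m).IsPrime := by
  refine ⟨fun h => ?_, fun {p q} hpq => or_iff_not_imp_right.2 fun hq => ?_⟩
  · have h1 : (1 : MvPolynomial (Fin n) R) ∉ initialVarsIdeal R n m :=
      notMem_initialVarsIdeal.2 ⟨0, by simp, fun _ _ => rfl⟩
    exact h1 (h ▸ Submodule.mem_top)
  · rw [initialVarsIdeal_eq_monomialSpan] at hpq ⊢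
    refine mem_monomialSpan_of_mul_mem ?_ hq hpq
    rintro _ ⟨i, hi : (i : ℕ) < m, rfl⟩ j hj
    exact Finsupp.single_eq_of_ne (Fin.ne_of_val_ne (by omega))

end InitialVars

section LowPart

variable {R : Type*} {n m : ℕ}

variable (m) in
noncomputable def lowPart (a : Fin n →₀ ℕ) : Fin n →₀ ℕ :=
  a.filter fun i => (i : ℕ) < m

theorem lowPart_apply (a : Fin n →₀ ℕ) (i : Fin n) :
    lowPart m a i = if (i : ℕ) < m then a i else 0 :=
  Finsupp.filter_apply _ _ _

theorem lowPart_le (a : Fin n →₀ ℕ) : lowPart m a ≤ a := fun i => by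
  rw [lowPart_apply]
  split_ifs <;> simp

theorem kerLoc_monomialSpan_initialVarsIdeal [CommRing R] [IsDomain R]
    (H : Set (Fin n →₀ ℕ)) :
    kerLoc (monomialSpan R H) (initialVarsIdeal R n m) initialVarsIdeal_isPrime =
      monomialSpan R (lowPart m '' H) := by
  apply le_antisymm
  · rintro r ⟨s, hs, hrs⟩
    refine mem_monomialSpan_of_mul_mem ?_ hs (mem_monomialSpan.2 fun a ha => ?_)
    · rintro _ ⟨g, -, rfl⟩ i hi
      simp [lowPart_apply, hi.not_gt]
    · obtain ⟨g, hg, hga⟩ := mem_monomialSpan.1 hrs a ha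
      exact ⟨lowPart m g, ⟨g, hg, rfl⟩, (lowPart_le g).trans hga⟩
  · rw [monomialSpan, Ideal.span_le]
    rintro _ ⟨_, ⟨g, hg, rfl⟩, rfl⟩
    refine ⟨monomial (g.filter fun i : Fin n => ¬ (i : ℕ) < m) 1, notMem_initialVarsIdeal.2
      ⟨g.filter fun i : Fin n => ¬ (i : ℕ) < m, by simp, fun i hi => by simp [hi]⟩, ?_⟩
    rw [monomial_mul, one_mul, lowPart, Finsupp.filter_add_filter_not]
    exact Ideal.subset_span ⟨g, hg, rfl⟩

variable (m) in
theorem IsBorelType.monomialSpan_image_lowPart {K : Type*} [Field K] {H : Set (Fin n →₀ ℕ)}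
    (hH : IsBorelType (monomialSpan K H)) :
    IsBorelType (monomialSpan K (lowPart m '' H)) := by
  intro a ha i j hij s hs₁ hs
  obtain ⟨_, ⟨g, hg, rfl⟩, hga⟩ := monomial_mem_monomialSpan.1 ha
  by_cases hj : (j : ℕ) < m
  · -- move inside `a * x^(high part of g)`, a multiple of `x^g` with the same `j`-th entry
    set c := a + g.filter fun l : Fin n => ¬ (l : ℕ) < m
    have hgc : g ≤ c := fun l => by
      have := hga l
      by_cases hl : (l : ℕ) < m <;> simp_all [c, lowPart_apply]
    obtain ⟨t, ht⟩ := hH c (monomial_mem_monomialSpan.2 ⟨g, hg, hgc⟩) i j hij s hs₁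
      (by simpa [c, hj] using hs)
    obtain ⟨h, hh, hhc⟩ := monomial_mem_monomialSpan.1 ht
    refine ⟨t, monomial_mem_monomialSpan.2 ⟨lowPart m h, ⟨h, hh, rfl⟩, fun l => ?_⟩⟩
    have := hhc l
    by_cases hl : (l : ℕ) < m
    · simp_all [c, lowPart_apply]
    · simp [lowPart_apply, hl]
  · refine ⟨0, monomial_mem_monomialSpan.2 ⟨lowPart m g, ⟨g, hg, rfl⟩, fun l => ?_⟩⟩
    have := hga l
    by_cases hl : l = j
    · subst hl
      simp [lowPart_apply, hj]
    · simp_all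

end LowPart

section SymbolicPower

variable {R : Type*} [CommRing R]

theorem Ideal.minimalPrimes_eq_singleton {I P : Ideal R} (hP : P.IsPrime) (hIP : I ≤ P)
    (h : ∀ Q : Ideal R, Q.IsPrime → I ≤ Q → P ≤ Q) : I.minimalPrimes = {P} := by
  ext Q
  refine ⟨fun hQ => le_antisymm (hQ.2 ⟨hP, hIP⟩ (h Q hQ.1.1 hQ.1.2)) (h Q hQ.1.1 hQ.1.2), ?_⟩
  rintro rfl
  exact ⟨⟨hP, hIP⟩, fun Q hQ _ => h Q hQ.1 hQ.2⟩

theorem symbolicPower_top (k : ℕ) : symbolicPower (⊤ : Ideal R) k = ⊤ := by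
  have : IsEmpty (⊤ : Ideal R).minimalPrimes := by
    rw [Ideal.minimalPrimes_top]
    infer_instance
  exact iInf_of_empty _

theorem symbolicPower_eq_kerLoc {I P : Ideal R} (hP : P.IsPrime) (h : I.minimalPrimes = {P})
    (k : ℕ) : symbolicPower I k = kerLoc (I ^ k) P hP := by
  apply le_antisymm
  · exact iInf_le_of_le ⟨P, h ▸ rfl⟩ le_rfl
  · refine le_iInf fun Q => ?_
    obtain ⟨Q, hQ⟩ := Q
    obtain rfl : Q = P := by simpa [h] using hQ
    exact le_rfl

end SymbolicPower

section MinimalPrimes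

variable {K : Type*} [Field K] {n : ℕ} {I : Ideal (MvPolynomial (Fin n) K)}

theorem IsMonomialIdeal.le_initialVarsIdeal (hI : IsMonomialIdeal I) (hI' : I ≠ ⊤) :
    I ≤ initialVarsIdeal K n n := by
  intro p hp
  by_contra h
  obtain ⟨a, ha, ha0⟩ := notMem_initialVarsIdeal.1 h
  obtain rfl : a = 0 := Finsupp.ext fun i => ha0 i i.isLt
  exact hI' ((Ideal.eq_top_iff_one I).2 (by simpa using hI.monomial_mem hp ha))

theorem IsBorelType.exists_X_pow_mem_of_not_le (hI : IsBorelType I) (hIm : IsMonomialIdeal I)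
    {i : Fin n} (h : ¬ I ≤ initialVarsIdeal K n i) : ∃ t, X i ^ t ∈ I := by
  obtain ⟨p, hp, hpi⟩ := SetLike.not_le_iff_exists.1 h
  obtain ⟨a, ha, hai⟩ := notMem_initialVarsIdeal.1 hpi
  exact hI.exists_X_pow_mem (hIm.monomial_mem hp ha) fun l hl => hai l hl

theorem IsBorelType.exists_minimalPrimes_eq (hI : IsBorelType I) (hIm : IsMonomialIdeal I)
    (hI' : I ≠ ⊤) : ∃ m, I.minimalPrimes = {initialVarsIdeal K n m} := by
  classical
  have hex : ∃ m, I ≤ initialVarsIdeal K n m := ⟨n, hIm.le_initialVarsIdeal hI'⟩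
  refine ⟨Nat.find hex, Ideal.minimalPrimes_eq_singleton initialVarsIdeal_isPrime
    (Nat.find_spec hex) fun Q hQ hIQ => Ideal.span_le.2 ?_⟩
  rintro _ ⟨i, hi, rfl⟩
  obtain ⟨t, ht⟩ := hI.exists_X_pow_mem_of_not_le hIm (Nat.find_min hex hi)
  exact hQ.mem_of_pow_mem t (hIQ ht)

end MinimalPrimes

theorem symbolicPower_borelType_general {K : Type*} [Field K] {n : ℕ}
    (I : Ideal (MvPolynomial (Fin n) K)) (hmon : IsMonomialIdeal I)
    (hBT : IsBorelType I) (k : ℕ) :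
    IsMonomialIdeal (symbolicPower I k) ∧ IsBorelType (symbolicPower I k) := by
  by_cases hI : I = ⊤
  · subst hI
    rw [symbolicPower_top]
    exact ⟨isMonomialIdeal_top, isBorelType_top⟩
  obtain ⟨m, hm⟩ := hBT.exists_minimalPrimes_eq hmon hI
  obtain ⟨H, hH⟩ : ∃ H, I ^ k = monomialSpan K H := hmon.pow k
  have hBk := hBT.pow hmon k
  rw [hH] at hBk
  rw [symbolicPower_eq_kerLoc initialVarsIdeal_isPrime hm, hH,
    kerLoc_monomialSpan_initialVarsIdeal]
  exact ⟨⟨_, rfl⟩, hBk.monomialSpan_image_lowPart m⟩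

/-- If `I` is a monomial ideal of Borel type, then the `k`-th symbolic power `I^(k)`
is a monomial ideal of Borel type. -/
theorem symbolicPower_borelType {K : Type*} [Field K] {n : ℕ}
    (I : Ideal (MvPolynomial (Fin n) K)) (hmon : IsMonomialIdeal I)
    (hBT : IsBorelType I) (k : ℕ) (hk : 1 ≤ k) :
    IsMonomialIdeal (symbolicPower I k) ∧ IsBorelType (symbolicPower I k) :=
  symbolicPower_borelType_general I hmon hBT k
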